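/- arXiv:1012.4047 — 2 statements merged into one kernel-verified Lean document; each statement's English description precedes it below -/
import Mathlib

section
/- Let b be a nonnegative even integer and let k and m be positive integers with m ≥ 2. Then E_{2^m k + b} ≡ E_b + 2^m k (mod 2^{m+2}). -/
/-!
Let `sech = ∑ Eₙ xⁿ / n!` be the reciprocal of `cosh`. From `sech' = -sinh sech²` and
`sinh² sech² = 1 - sech²` one gets `(sechᵏ)'' = k² sechᵏ - k (k + 1) sechᵏ⁺²`, so encoding
`∑ pⱼ sech²ʲ⁺¹` by `p = ∑ pⱼ Xʲ ∈ ℤ[X]` turns `d²/dx²` into an explicit operator `L` on `ℤ[X]`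
(`secondDerivOp`), and `E₂ₙ = (Lⁿ 1)(1)`.

A direct computation gives `L² = 1 + 4 D` (`defectOp`) with `D (Xʲ)` a multiple of `j + 1`,
so `D (D Xʲ)` carries the even factor `(j + 1)(j + 2)`. Hence `D² ≡ 0 (mod 2)`, and repeated squaring gives
`L^(2^(s+1)) ≡ 1 + 2^(s+2) D (mod 2^(s+4))`. Finally `p ↦ (D p)(1) mod 4` is invariant under
`L`, so `(D (Lⁿ 1))(1) ≡ (D 1)(1) = 1 (mod 4)`, whence `E_(b + 2^m) ≡ E_b + 2^m (mod 2^(m+2))`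
for even `b` and `m ≥ 2`.
-/

/-- The Euler numbers `E n`, defined by `E 0 = 1`, `E (2n-1) = 0` for `n ≥ 1`,
and `∑_{r=0}^{n} C(2n, 2r) * E (2r) = 0` for `n ≥ 1`. -/
def eulerE : ℕ → ℤ
  | 0 => 1
  | 1 => 0
  | n + 2 =>
      if Even n then
        -∑ r ∈ (Finset.range (n / 2 + 1)).attach,
          ((n + 2).choose (2 * r.1) : ℤ) * eulerE (2 * r.1)
      else 0
  decreasing_by
    have := r.2
    simp only [Finset.mem_range] at this
    omega


open Finset Polynomial
open scoped Nat PowerSeries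

theorem eulerE_eq_zero_of_odd {n : ℕ} (h : Odd n) : eulerE n = 0 := by
  match n with
  | 1 => rw [eulerE]
  | n + 2 => rw [eulerE, if_neg (by simpa [parity_simps] using h)]

theorem sum_range_two_mul_add_one_of_odd_eq_zero {M : Type*} [AddCommMonoid M] (g : ℕ → M)
    (hg : ∀ i, Odd i → g i = 0) (n : ℕ) :
    ∑ i ∈ range (2 * n + 1), g i = ∑ r ∈ range (n + 1), g (2 * r) := by
  induction n with
  | zero => simp
  | succ n ih =>
    rw [show 2 * (n + 1) + 1 = 2 * n + 1 + 1 + 1 by ring, sum_range_succ, sum_range_succ, ih,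
      hg _ (odd_two_mul_add_one n), add_zero, sum_range_succ (n := n + 1)]
    rfl

theorem sum_range_choose_mul_eulerE {n : ℕ} (hn : 0 < n) (he : Even n) :
    ∑ i ∈ range (n + 1), (n.choose i : ℤ) * eulerE i = 0 := by
  obtain ⟨M, rfl⟩ : ∃ M, n = 2 * (M + 1) := by
    obtain ⟨t, rfl⟩ := he
    exact ⟨t - 1, by omega⟩
  have hrec : eulerE (2 * M + 2) =
      -∑ r ∈ range (M + 1), ((2 * M + 2).choose (2 * r) : ℤ) * eulerE (2 * r) := by
    rw [eulerE.eq_3, if_pos (even_two_mul M), Nat.mul_div_cancel_left M two_pos,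
      sum_attach (range (M + 1)) fun r => ((2 * M + 2).choose (2 * r) : ℤ) * eulerE (2 * r)]
  rw [sum_range_two_mul_add_one_of_odd_eq_zero _
      fun i hi => by rw [eulerE_eq_zero_of_odd hi, mul_zero],
    sum_range_succ, Nat.choose_self]
  linear_combination hrec

noncomputable def coshSeries : ℚ⟦X⟧ :=
  PowerSeries.mk fun n => if Even n then (n ! : ℚ)⁻¹ else 0

noncomputable def sinhSeries : ℚ⟦X⟧ := d⁄dX ℚ coshSeries

noncomputable def sechSeries : ℚ⟦X⟧ := PowerSeries.mk fun n => eulerE n / n !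

theorem sechSeries_mul_coshSeries : sechSeries * coshSeries = 1 := by
  ext n
  rw [PowerSeries.coeff_mul, Nat.sum_antidiagonal_eq_sum_range_succ_mk, PowerSeries.coeff_one]
  simp only [sechSeries, coshSeries, PowerSeries.coeff_mk]
  rcases Nat.eq_zero_or_pos n with rfl | hn
  · simp [eulerE]
  rw [if_neg hn.ne']
  rcases Nat.even_or_odd n with hn_even | hn_odd
  · have hterm : ∀ i ∈ range (n + 1),
        (eulerE i / i ! : ℚ) * (if Even (n - i) then ((n - i)! : ℚ)⁻¹ else 0) =
          ((n.choose i * eulerE i : ℤ) : ℚ) / n ! := by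
      intro i hi
      have hin : i ≤ n := Nat.lt_succ_iff.mp (mem_range.mp hi)
      rcases Nat.even_or_odd i with hi | hi
      · rw [if_pos ((Nat.even_sub hin).mpr (iff_of_true hn_even hi)), eq_div_iff (by positivity),
          ← Nat.choose_mul_factorial_mul_factorial hin]
        push_cast
        field_simp
      · simp [eulerE_eq_zero_of_odd hi]
    rw [sum_congr rfl hterm, ← sum_div, ← Int.cast_sum, sum_range_choose_mul_eulerE hn hn_even]
    simp
  · refine sum_eq_zero fun i hi => ?_
    have hin : i ≤ n := Nat.lt_succ_iff.mp (mem_range.mp hi)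
    rcases Nat.even_or_odd i with hi | hi
    · rw [if_neg (Nat.not_even_iff_odd.mpr ((Nat.odd_sub hin).mpr (iff_of_true hn_odd hi))),
        mul_zero]
    · simp [eulerE_eq_zero_of_odd hi]

theorem derivative_sinhSeries : d⁄dX ℚ sinhSeries = coshSeries := by
  ext n
  simp only [sinhSeries, PowerSeries.coeff_derivative, coshSeries, PowerSeries.coeff_mk,
    Nat.even_add_one, not_not]
  split_ifs
  · rw [Nat.factorial_succ, Nat.factorial_succ]
    push_cast
    field_simp
  · simp

theorem constantCoeff_coshSeries : PowerSeries.constantCoeff coshSeries = 1 := by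
  simp [coshSeries, ← PowerSeries.coeff_zero_eq_constantCoeff_apply]

theorem constantCoeff_sinhSeries : PowerSeries.constantCoeff sinhSeries = 0 := by
  simp [sinhSeries, coshSeries, ← PowerSeries.coeff_zero_eq_constantCoeff_apply,
    PowerSeries.coeff_derivative]

theorem constantCoeff_sechSeries : PowerSeries.constantCoeff sechSeries = 1 := by
  simp [sechSeries, ← PowerSeries.coeff_zero_eq_constantCoeff_apply, eulerE]

theorem coshSeries_sq_sub_sinhSeries_sq : coshSeries ^ 2 - sinhSeries ^ 2 = 1 := by
  refine PowerSeries.derivative.ext ?_ ?_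
  · rw [map_sub, PowerSeries.derivative_pow, PowerSeries.derivative_pow, derivative_sinhSeries,
      PowerSeries.derivative_one, ← sinhSeries]
    ring
  · simp [constantCoeff_coshSeries, constantCoeff_sinhSeries]

theorem sinhSeries_sq_mul_sechSeries_sq :
    sinhSeries ^ 2 * sechSeries ^ 2 = 1 - sechSeries ^ 2 := by
  linear_combination (-sechSeries ^ 2) * coshSeries_sq_sub_sinhSeries_sq
    + (sechSeries * coshSeries + 1) * sechSeries_mul_coshSeries

theorem derivative_sechSeries : d⁄dX ℚ sechSeries = -(sinhSeries * sechSeries ^ 2) := by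
  have h := congrArg (d⁄dX ℚ) sechSeries_mul_coshSeries
  rw [Derivation.leibniz, PowerSeries.derivative_one, ← sinhSeries, smul_eq_mul, smul_eq_mul] at h
  linear_combination sechSeries * h - (d⁄dX ℚ sechSeries) * sechSeries_mul_coshSeries

theorem derivative_sechSeries_pow (k : ℕ) :
    d⁄dX ℚ (sechSeries ^ k) = -(k * sinhSeries * sechSeries ^ (k + 1)) := by
  rw [PowerSeries.derivative_pow, derivative_sechSeries]
  rcases k with _ | k
  · simp
  · push_cast
    ring

theorem derivative_derivative_sechSeries_pow (k : ℕ) :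
    d⁄dX ℚ (d⁄dX ℚ (sechSeries ^ k)) =
      k ^ 2 * sechSeries ^ k - k * (k + 1) * sechSeries ^ (k + 2) := by
  rw [derivative_sechSeries_pow, map_neg, Derivation.leibniz, derivative_sechSeries_pow,
    Derivation.leibniz, derivative_sinhSeries, Derivation.map_natCast]
  simp only [smul_eq_mul]
  push_cast
  linear_combination (k * (k + 1) * sechSeries ^ k : ℚ⟦X⟧) * sinhSeries_sq_mul_sechSeries_sq
    - (k * sechSeries ^ k : ℚ⟦X⟧) * sechSeries_mul_coshSeries

noncomputable def secondDerivOp : Module.End ℤ ℤ[X] :=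
  lsum fun j => LinearMap.toSpanSingleton ℤ ℤ[X]
    (((2 * j + 1) ^ 2 : ℤ) • X ^ j - ((2 * j + 1) * (2 * j + 2) : ℤ) • X ^ (j + 1))

theorem secondDerivOp_X_pow (j : ℕ) : secondDerivOp (X ^ j) =
    ((2 * j + 1) ^ 2 : ℤ) • X ^ j - ((2 * j + 1) * (2 * j + 2) : ℤ) • X ^ (j + 1) := by
  simp [secondDerivOp, ← monomial_one_right_eq_X_pow]

noncomputable def oddSechPow : ℤ[X] →ₗ[ℤ] ℚ⟦X⟧ :=
  LinearMap.mulLeft ℤ sechSeries ∘ₗ (aeval (sechSeries ^ 2)).toLinearMap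

theorem oddSechPow_apply (p : ℤ[X]) : oddSechPow p = sechSeries * aeval (sechSeries ^ 2) p :=
  rfl

theorem oddSechPow_X_pow (j : ℕ) : oddSechPow (X ^ j) = sechSeries ^ (2 * j + 1) := by
  rw [oddSechPow_apply, aeval_X_pow, ← pow_mul, pow_succ']

theorem constantCoeff_oddSechPow (p : ℤ[X]) :
    PowerSeries.constantCoeff (oddSechPow p) = p.eval 1 := by
  induction p using Polynomial.induction_on' with
  | add p q hp hq => simp only [map_add, hp, hq, eval_add, Int.cast_add]
  | monomial j a => simp [oddSechPow_apply, constantCoeff_sechSeries]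

theorem derivative_derivative_oddSechPow (p : ℤ[X]) :
    d⁄dX ℚ (d⁄dX ℚ (oddSechPow p)) = oddSechPow (secondDerivOp p) := by
  induction p using Polynomial.induction_on' with
  | add p q hp hq => simp only [map_add, hp, hq]
  | monomial j a =>
    rw [← C_mul_X_pow_eq_monomial, ← smul_eq_C_mul, map_zsmul, map_zsmul, map_zsmul, map_zsmul,
      map_zsmul, secondDerivOp_X_pow, oddSechPow_X_pow, derivative_derivative_sechSeries_pow,
      map_sub, map_zsmul, map_zsmul, oddSechPow_X_pow, oddSechPow_X_pow]
    simp only [zsmul_eq_mul]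
    push_cast
    ring

theorem iterate_derivative_sechSeries (n : ℕ) :
    (d⁄dX ℚ)^[2 * n] sechSeries = oddSechPow ((secondDerivOp ^ n) 1) := by
  induction n with
  | zero => simp [oddSechPow_apply]
  | succ n ih =>
    rw [mul_add_one, add_comm, Function.iterate_add_apply, ih, pow_succ', Module.End.mul_apply,
      ← derivative_derivative_oddSechPow]
    rfl

theorem eulerE_two_mul_eq_eval (n : ℕ) : eulerE (2 * n) = ((secondDerivOp ^ n) 1).eval 1 := by
  have h := PowerSeries.constantCoeff_iterate_derivative sechSeries (2 * n)
  rw [iterate_derivative_sechSeries, constantCoeff_oddSechPow, sechSeries, PowerSeries.coeff_mk,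
    mul_div_cancel₀ _ (by positivity)] at h
  exact_mod_cast h.symm

noncomputable def defectPoly (j : ℕ) : ℤ[X] :=
  (2 * j * (2 * j ^ 2 + 2 * j + 1) : ℤ) • X ^ j
    - ((2 * j + 1) * (4 * j ^ 2 + 8 * j + 5) : ℤ) • X ^ (j + 1)
    + ((j + 2) * (2 * j + 1) * (2 * j + 3) : ℤ) • X ^ (j + 2)

noncomputable def defectOp : Module.End ℤ ℤ[X] :=
  lsum fun j => LinearMap.toSpanSingleton ℤ ℤ[X] ((j + 1 : ℤ) • defectPoly j)

theorem defectOp_X_pow (j : ℕ) : defectOp (X ^ j) = (j + 1 : ℤ) • defectPoly j := by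
  simp [defectOp, ← monomial_one_right_eq_X_pow]

theorem secondDerivOp_sq : secondDerivOp ^ 2 = 1 + (4 : ℤ) • defectOp := by
  refine lhom_ext' fun j => LinearMap.ext_ring ?_
  simp only [LinearMap.comp_apply, monomial_one_right_eq_X_pow, pow_two, Module.End.mul_apply,
    LinearMap.add_apply, LinearMap.smul_apply, Module.End.one_apply, secondDerivOp_X_pow, map_sub,
    map_zsmul, defectOp_X_pow, defectPoly, add_assoc]
  push_cast
  module

theorem exists_defectOp_defectOp_eq_two_smul (p : ℤ[X]) :
    ∃ q, defectOp (defectOp p) = (2 : ℤ) • q := by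
  have hX (j : ℕ) : ∃ q, defectOp (defectOp (X ^ j)) = (2 : ℤ) • q := by
    obtain ⟨e, he⟩ := Nat.even_mul_succ_self (j + 1)
    have he' : ((j + 1 : ℤ) * (j + 1 + 1)) = e + e := by exact_mod_cast he
    refine ⟨(j * (j + 1) * (2 * j ^ 2 + 2 * j + 1) : ℤ) • defectOp (X ^ j)
      - (e * ((2 * j + 1) * (4 * j ^ 2 + 8 * j + 5)) : ℤ) • defectPoly (j + 1)
      + (e * ((2 * j + 1) * (2 * j + 3)) : ℤ) • defectOp (X ^ (j + 2)), ?_⟩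
    nth_rw 1 [defectOp_X_pow j]
    rw [map_zsmul, defectPoly, map_add, map_sub, map_zsmul, map_zsmul, map_zsmul,
      defectOp_X_pow (j + 1)]
    push_cast
    linear_combination (norm := module)
      he' • (((2 * j + 1) * (2 * j + 3) : ℤ) • defectOp (X ^ (j + 2))
        - ((2 * j + 1) * (4 * j ^ 2 + 8 * j + 5) : ℤ) • defectPoly (j + 1))
  induction p using Polynomial.induction_on' with
  | add p q hp hq =>
    obtain ⟨u, hu⟩ := hp
    obtain ⟨v, hv⟩ := hq
    exact ⟨u + v, by rw [map_add, map_add, hu, hv, smul_add]⟩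
  | monomial j a =>
    obtain ⟨q, hq⟩ := hX j
    refine ⟨a • q, ?_⟩
    rw [← C_mul_X_pow_eq_monomial, ← smul_eq_C_mul, map_zsmul, map_zsmul, hq, smul_comm]

theorem exists_secondDerivOp_pow_two_pow_eq (s : ℕ) (p : ℤ[X]) :
    ∃ u, (secondDerivOp ^ 2 ^ (s + 1)) p =
      p + (2 ^ (s + 2) : ℤ) • defectOp p + (2 ^ (s + 4) : ℤ) • u := by
  induction s generalizing p with
  | zero =>
    refine ⟨0, ?_⟩
    rw [zero_add, pow_one, secondDerivOp_sq]
    simp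
  | succ s ih =>
    obtain ⟨u, hu⟩ := ih p
    obtain ⟨u₁, hu₁⟩ := ih (defectOp p)
    obtain ⟨u₂, hu₂⟩ := ih u
    obtain ⟨w, hw⟩ := exists_defectOp_defectOp_eq_two_smul p
    refine ⟨u + (2 ^ (s + 1) : ℤ) • (u₁ + defectOp u) + (2 ^ (s + 3) : ℤ) • u₂
      + (2 ^ s : ℤ) • w, ?_⟩
    rw [pow_succ 2 (s + 1), pow_mul, pow_two, Module.End.mul_apply, hu, map_add, map_add,
      map_zsmul, map_zsmul, hu, hu₁, hu₂, hw]
    module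

theorem eval_one_defectOp_secondDerivOp_modEq (p : ℤ[X]) :
    (defectOp (secondDerivOp p)).eval 1 ≡ (defectOp p).eval 1 [ZMOD 4] := by
  have hX (j : ℕ) :
      (defectOp (secondDerivOp (X ^ j))).eval 1 ≡ (defectOp (X ^ j)).eval 1 [ZMOD 4] := by
    obtain ⟨e, he⟩ := Nat.even_mul_succ_self (j + 1)
    have he' : ((j + 1 : ℤ) * (j + 1 + 1)) = e + e := by exact_mod_cast he
    rw [Int.modEq_iff_dvd, secondDerivOp_X_pow, map_sub, map_zsmul, map_zsmul]
    simp only [defectOp_X_pow, eval_sub, eval_smul, smul_eq_mul]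
    push_cast
    exact ⟨(2 * j + 1) * e * (defectPoly (j + 1)).eval 1
      - j * (j + 1) * ((j + 1) * (defectPoly j).eval 1),
      by linear_combination (2 * (2 * j + 1) * (defectPoly (j + 1)).eval 1) * he'⟩
  induction p using Polynomial.induction_on' with
  | add p q hp hq => simpa only [map_add, eval_add] using hp.add hq
  | monomial j a =>
    simpa only [← C_mul_X_pow_eq_monomial, ← smul_eq_C_mul, map_zsmul, eval_smul, smul_eq_mul]
      using (hX j).mul_left a

theorem eval_one_defectOp_secondDerivOp_pow_modEq (n : ℕ) :
    (defectOp ((secondDerivOp ^ n) 1)).eval 1 ≡ 1 [ZMOD 4] := by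
  induction n with
  | zero =>
    rw [pow_zero, Module.End.one_apply, ← pow_zero X, defectOp_X_pow]
    simp [defectPoly]
  | succ n ih =>
    rw [pow_succ', Module.End.mul_apply]
    exact (eval_one_defectOp_secondDerivOp_modEq _).trans ih

theorem eulerE_add_two_pow_modEq {b m : ℕ} (hb : Even b) (hm : 2 ≤ m) :
    eulerE (b + 2 ^ m) ≡ eulerE b + 2 ^ m [ZMOD 2 ^ (m + 2)] := by
  obtain ⟨n, rfl⟩ : ∃ n, b = 2 * n := by
    obtain ⟨n, rfl⟩ := hb
    exact ⟨n, by ring⟩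
  obtain ⟨s, rfl⟩ : ∃ s, m = s + 2 := ⟨m - 2, by omega⟩
  obtain ⟨u, hu⟩ := exists_secondDerivOp_pow_two_pow_eq s ((secondDerivOp ^ n) 1)
  obtain ⟨c, hc⟩ := Int.modEq_iff_dvd.mp
    ((eval_one_defectOp_secondDerivOp_pow_modEq n).mul_left' (c := 2 ^ (s + 2)))
  rw [show 2 * n + 2 ^ (s + 2) = 2 * (2 ^ (s + 1) + n) by ring, eulerE_two_mul_eq_eval,
    eulerE_two_mul_eq_eval, pow_add secondDerivOp, Module.End.mul_apply, hu]
  simp only [eval_add, eval_smul, smul_eq_mul]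
  exact Int.modEq_iff_dvd.mpr ⟨c - u.eval 1, by linear_combination hc⟩

theorem stern_congruence_m_ge_two_general (b k m : ℕ) (hb : Even b) (hm : 2 ≤ m) :
    eulerE (2 ^ m * k + b) ≡ eulerE b + 2 ^ m * k [ZMOD 2 ^ (m + 2)] := by
  induction k with
  | zero => simp
  | succ k ih =>
    have hev : Even (2 ^ m * k + b) := ((even_two.pow_of_ne_zero (by omega)).mul_right k).add hb
    rw [mul_add_one, add_right_comm]
    calc eulerE (2 ^ m * k + b + 2 ^ m)
        _ ≡ eulerE (2 ^ m * k + b) + 2 ^ m [ZMOD 2 ^ (m + 2)] := eulerE_add_two_pow_modEq hev hm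
        _ ≡ eulerE b + 2 ^ m * k + 2 ^ m [ZMOD 2 ^ (m + 2)] := ih.add_right _
        _ = eulerE b + 2 ^ m * ↑(k + 1) := by push_cast; ring

theorem stern_congruence_m_ge_two (b k m : ℕ) (hb : Even b) (hk : 0 < k) (hm : 2 ≤ m) :
    eulerE (2 ^ m * k + b) ≡ eulerE b + 2 ^ m * k [ZMOD 2 ^ (m + 2)] :=
  stern_congruence_m_ge_two_general b k m hb hm
end

section
/- Let b be a nonnegative even integer. Then 3·(3^{b+1}+1)/4·E_b − 4·(3^{b+3}+1)/4·E_{b+2} + (3^{b+5}+1)/4·E_{b+4} ≡ −176 − 64b (mod 2^{9}). -/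
/-!
The exponential generating function of the Euler numbers is `E(x) = sech x = 2 / (eˣ + e⁻ˣ)`;
write `[F]ₙ = n! · coeff n F`. For `f = sech (a x)` one has `f'² = a² (f² - f⁴)` and
`f'' = a² (f - 2 f³)`, so `L = (D² - 1)(D² - 3)` maps `f` to a polynomial in `f`. Hence, as
`eˣ + e⁻ˣ` divides `e³ˣ + e⁻³ˣ`, for `T = 3 L(E(3x)) + L(E(x)) + 352 (eˣ + e⁻ˣ) + 128 x (eˣ - e⁻ˣ)`
the product `N = T · (e³ˣ + e⁻³ˣ)⁵` is an exponential polynomial `∑ⱼ (αⱼ + βⱼ x) e^{(2j-16)x}`.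
All `αⱼ, βⱼ` are divisible by `2⁵` and all frequencies are even, so `2¹⁶` divides every `[N]ₙ`
(termwise for `n ≥ 12`, by computation below). As `32 T = N · E(3x)⁵` and `E(3x)` has integral
`[·]ₙ`, `2¹¹` divides every `[T]ₙ`; and for even `b`, `[T]_b = 4 (S_b + 176 + 64 b)`, where `S_b`
is the left-hand side of the congruence.
-/

open PowerSeries Finset
open scoped Nat

theorem Finset.sum_range_two_mul_add_one_of_odd {M : Type*} [AddCommMonoid M] {f : ℕ → M}
    (hf : ∀ k, Odd k → f k = 0) (m : ℕ) :
    ∑ k ∈ range (2 * m + 1), f k = ∑ r ∈ range (m + 1), f (2 * r) := by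
  induction m with
  | zero => simp
  | succ m ih =>
    rw [show 2 * (m + 1) + 1 = 2 * m + 1 + 1 + 1 by ring, sum_range_succ, sum_range_succ, ih,
      hf _ (odd_two_mul_add_one m), add_zero, sum_range_succ (n := m + 1), mul_add, mul_one]

theorem eulerE_of_odd {n : ℕ} (hn : Odd n) : eulerE n = 0 := by
  match n, hn with
  | 0, h => exact absurd h Nat.not_odd_zero
  | 1, _ => rw [eulerE]
  | n + 2, hn => rw [eulerE, if_neg (by simpa [Nat.odd_add_one, parity_simps] using hn)]

theorem sum_choose_mul_eulerE {n : ℕ} (hn : Even n) (h0 : n ≠ 0) :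
    ∑ k ∈ range (n + 1), (n.choose k : ℤ) * eulerE k = 0 := by
  obtain ⟨m, rfl⟩ : ∃ m, n = 2 * (m + 1) := by
    obtain ⟨k, rfl⟩ := hn
    exact ⟨k - 1, by omega⟩
  rw [sum_range_two_mul_add_one_of_odd (fun k hk => by rw [eulerE_of_odd hk, mul_zero]),
    sum_range_succ, Nat.choose_self, Nat.cast_one, one_mul,
    show 2 * (m + 1) = 2 * m + 2 by ring, eulerE, if_pos (even_two_mul m),
    sum_attach (range (2 * m / 2 + 1)) fun r => ((2 * m + 2).choose (2 * r) : ℤ) * eulerE (2 * r),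
    Nat.mul_div_cancel_left m two_pos, add_neg_cancel]

section Sech

variable {A R : Type*} [CommRing A] [CommRing R] [Algebra A R]

theorem Derivation.map_ofNat (D : Derivation A R R) (n : ℕ) [n.AtLeastTwo] :
    D (no_index (OfNat.ofNat n : R)) = 0 :=
  (Nat.cast_ofNat (R := R) (n := n)) ▸ D.map_natCast n

/-- The operator `(D² - 1)(D² - 3)`; on exponential generating functions it sends `(cₙ)` to
`(cₙ₊₄ - 4 cₙ₊₂ + 3 cₙ)`. -/
def eulerOp (D : Derivation A R R) (f : R) : R := D (D (D (D f))) - 4 * D (D f) + 3 * f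

/-- `f = sech (a x) = 2 / (u + v)` with `u = e^{a x}` and `v = e^{-a x}`. -/
structure IsSech (D : Derivation A R R) (a u v f : R) : Prop where
  mul_eq_one : u * v = 1
  derivation_u : D u = a * u
  derivation_v : D v = -(a * v)
  derivation_a : D a = 0
  mul_add_eq_two : f * (u + v) = 2

def sechEulerOp (a f : R) : R :=
  a ^ 4 * (f - 20 * f ^ 3 + 24 * f ^ 5) - 4 * a ^ 2 * (f - 2 * f ^ 3) + 3 * f

theorem fourth_derivation_eq_of_ode (D : Derivation A R R) {k f : R} (hk : D k = 0)
    (h1 : D f ^ 2 = k * (f ^ 2 - f ^ 4)) (h2 : D (D f) = k * (f - 2 * f ^ 3)) :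
    D (D (D (D f))) = k ^ 2 * (f - 20 * f ^ 3 + 24 * f ^ 5) := by
  have h3 : D (D (D f)) = k * (1 - 6 * f ^ 2) * D f := by
    simp only [h2, D.leibniz, D.leibniz_pow, map_sub, D.map_ofNat, hk, smul_eq_mul, nsmul_eq_mul]
    ring
  rw [h3]
  simp only [D.leibniz, D.leibniz_pow, map_sub, D.map_one_eq_zero, D.map_ofNat, hk, h2,
    smul_eq_mul, nsmul_eq_mul]
  linear_combination (-12 * k * f) * h1

namespace IsSech

variable {D : Derivation A R R} {a u v f : R}

theorem two_mul_derivation (h : IsSech D a u v f) : 2 * D f = a * (v - u) * f ^ 2 := by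
  have h' := congrArg D h.mul_add_eq_two
  rw [D.leibniz, D.map_add, h.derivation_u, h.derivation_v, D.map_ofNat, smul_eq_mul,
    smul_eq_mul] at h'
  linear_combination f * h' - D f * h.mul_add_eq_two

variable [IsDomain R] [CharZero R]

theorem derivation_sq (h : IsSech D a u v f) : D f ^ 2 = a ^ 2 * (f ^ 2 - f ^ 4) := by
  refine mul_left_cancel₀ (by norm_num : (4 : R) ≠ 0) ?_
  linear_combination (2 * D f + a * (v - u) * f ^ 2) * h.two_mul_derivation
    + (a ^ 2 * f ^ 3 * (u + v) + 2 * a ^ 2 * f ^ 2) * h.mul_add_eq_two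
    - 4 * a ^ 2 * f ^ 4 * h.mul_eq_one

theorem derivation_derivation (h : IsSech D a u v f) : D (D f) = a ^ 2 * (f - 2 * f ^ 3) := by
  have h' := congrArg D h.two_mul_derivation
  simp only [D.leibniz, D.leibniz_pow, map_sub, D.map_ofNat, h.derivation_u, h.derivation_v,
    h.derivation_a, smul_eq_mul, nsmul_eq_mul] at h'
  refine mul_left_cancel₀ (two_ne_zero (α := R)) ?_
  linear_combination h' + a * (v - u) * f * h.two_mul_derivation - 4 * a ^ 2 * f ^ 3 * h.mul_eq_one
    + (a ^ 2 * (u + v) * f ^ 2 + a ^ 2 * f) * h.mul_add_eq_two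

theorem eulerOp_eq (h : IsSech D a u v f) : eulerOp D f = sechEulerOp a f := by
  have hk : D (a ^ 2) = 0 := by rw [D.leibniz_pow, h.derivation_a, smul_zero, smul_zero]
  rw [eulerOp, fourth_derivation_eq_of_ode D hk h.derivation_sq h.derivation_derivation,
    h.derivation_derivation, sechEulerOp]
  ring

end IsSech

end Sech

def numeratorCoeff : Fin 17 → ℤ :=
  ![352, 352, 192, 2816, -2656, -24000, -19520, 37216, 76032, 37216, -19520, -24000, -2656, 2816,
    192, 352, 352]

def numeratorCoeffX : Fin 17 → ℤ :=
  ![-128, 128, 0, -640, 640, 0, -1280, 1280, 0, -1280, 1280, 0, -640, 640, 0, -128, 128]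

/-- With `u = eˣ`, `v = e⁻ˣ` this is `∑ⱼ (αⱼ + βⱼ x) e^{(2j - 16) x}`. -/
def numerator {R : Type*} [CommRing R] (u v x : R) : R :=
  v ^ 16 * ∑ j : Fin 17, (numeratorCoeff j + numeratorCoeffX j * x) * u ^ (2 * (j : ℕ))

theorem mul_pow_five_eq_numerator_of_field {K : Type*} [Field K] [CharZero K] {u v f g x : K}
    (huv : u * v = 1) (hf : f * (u + v) = 2) (hg : g * (u ^ 3 + v ^ 3) = 2) :
    (3 * sechEulerOp 3 g + sechEulerOp 1 f + 352 * (u + v) + 128 * x * (u - v))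
      * (u ^ 3 + v ^ 3) ^ 5 = numerator u v x := by
  have hu : u ≠ 0 := left_ne_zero_of_mul_eq_one huv
  have hc : u + v ≠ 0 := right_ne_zero_of_mul (hf ▸ two_ne_zero)
  have hc3 : u ^ 3 + v ^ 3 ≠ 0 := right_ne_zero_of_mul (hg ▸ two_ne_zero)
  obtain rfl : v = u⁻¹ := eq_inv_of_mul_eq_one_right huv
  obtain rfl : f = 2 / (u + u⁻¹) := eq_div_of_mul_eq hc hf
  obtain rfl : g = 2 / (u ^ 3 + u⁻¹ ^ 3) := eq_div_of_mul_eq hc3 hg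
  have hc' : u ^ 2 + 1 ≠ 0 := by
    convert mul_ne_zero hu hc using 1
    field_simp
  have hc3' : u ^ 6 + 1 ≠ 0 := by
    convert mul_ne_zero (pow_ne_zero 3 hu) hc3 using 1
    field_simp
  simp only [sechEulerOp, numerator, numeratorCoeff, numeratorCoeffX, Fin.sum_univ_succ,
    Fin.sum_univ_zero, Matrix.cons_val_zero, Matrix.cons_val_succ, Fin.val_zero, Fin.val_succ]
  push_cast
  field_simp
  ring

theorem mul_pow_five_eq_numerator {R : Type*} [CommRing R] [IsDomain R] [CharZero R]
    {u v f g x : R} (huv : u * v = 1) (hf : f * (u + v) = 2) (hg : g * (u ^ 3 + v ^ 3) = 2) :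
    (3 * sechEulerOp 3 g + sechEulerOp 1 f + 352 * (u + v) + 128 * x * (u - v))
      * (u ^ 3 + v ^ 3) ^ 5 = numerator u v x := by
  refine IsFractionRing.injective R (FractionRing R) ?_
  set ι := algebraMap R (FractionRing R)
  have := mul_pow_five_eq_numerator_of_field (u := ι u) (v := ι v) (f := ι f) (g := ι g)
    (x := ι x) (by rw [← map_mul, huv, map_one]) (by rw [← map_add, ← map_mul, hf, map_ofNat])
    (by rw [← map_pow, ← map_pow, ← map_add, ← map_mul, hg, map_ofNat])
  simpa [sechEulerOp, numerator, map_sum, map_ofNat] using this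

def numeratorEGFCoeff (n : ℕ) : ℤ :=
  ∑ j : Fin 17,
    (numeratorCoeff j * (2 * j - 16) ^ n + n * numeratorCoeffX j * (2 * j - 16) ^ (n - 1))

theorem pow_add_sub_one_dvd_sum {ι : Type*} (s : Finset ι) {d : ℤ} {k n : ℕ} {α β a : ι → ℤ}
    (hα : ∀ j, d ^ k ∣ α j) (hβ : ∀ j, d ^ k ∣ β j) (ha : ∀ j, d ∣ a j) :
    d ^ (k + n - 1) ∣ ∑ j ∈ s, (α j * a j ^ n + n * β j * a j ^ (n - 1)) := by
  refine dvd_sum fun j _ => dvd_add ?_ ?_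
  · exact (pow_dvd_pow d (by omega)).trans
      (pow_add d k n ▸ mul_dvd_mul (hα j) (pow_dvd_pow_of_dvd (ha j) n))
  · rw [mul_assoc]
    exact dvd_mul_of_dvd_right ((pow_dvd_pow d (by omega)).trans
      (pow_add d k (n - 1) ▸ mul_dvd_mul (hβ j) (pow_dvd_pow_of_dvd (ha j) (n - 1)))) _

theorem two_pow_sixteen_dvd_numeratorEGFCoeff (n : ℕ) : 2 ^ 16 ∣ numeratorEGFCoeff n := by
  rcases lt_or_ge n 12 with hn | hn
  · revert n
    decide
  · exact (pow_dvd_pow 2 (by omega)).trans <| pow_add_sub_one_dvd_sum (k := 5) _ (by decide)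
      (by decide) fun j => ⟨j - 8, by ring⟩

noncomputable def egfCoeff (n : ℕ) : ℚ⟦X⟧ →ₗ[ℚ] ℚ := (n ! : ℚ) • coeff n

theorem egfCoeff_apply (n : ℕ) (f : ℚ⟦X⟧) : egfCoeff n f = n ! * coeff n f := rfl

theorem ext_egfCoeff {f g : ℚ⟦X⟧} (h : ∀ n, egfCoeff n f = egfCoeff n g) : f = g := by
  ext n
  simpa [egfCoeff_apply, Nat.factorial_ne_zero] using h n

theorem egfCoeff_mul (n : ℕ) (f g : ℚ⟦X⟧) :
    egfCoeff n (f * g) =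
      ∑ p ∈ antidiagonal n, (n.choose p.1 : ℚ) * (egfCoeff p.1 f * egfCoeff p.2 g) := by
  rw [egfCoeff_apply, coeff_mul, mul_sum]
  refine sum_congr rfl fun p hp => ?_
  rw [HasAntidiagonal.mem_antidiagonal] at hp
  subst hp
  rw [egfCoeff_apply, egfCoeff_apply, ← Nat.add_choose_mul_factorial_mul_factorial,
    Nat.choose_symm_add]
  push_cast
  ring

theorem egfCoeff_derivative (n : ℕ) (f : ℚ⟦X⟧) :
    egfCoeff n (d⁄dX ℚ f) = egfCoeff (n + 1) f := by
  rw [egfCoeff_apply, egfCoeff_apply, coeff_derivative, Nat.factorial_succ]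
  push_cast
  ring

theorem egfCoeff_X_mul (n : ℕ) (f : ℚ⟦X⟧) : egfCoeff n (X * f) = n * egfCoeff (n - 1) f := by
  cases n with
  | zero => simp [egfCoeff_apply]
  | succ n =>
    rw [egfCoeff_apply, coeff_succ_X_mul, egfCoeff_apply, Nat.add_sub_cancel, Nat.factorial_succ]
    push_cast
    ring

theorem egfCoeff_intCast_mul (n : ℕ) (z : ℤ) (f : ℚ⟦X⟧) :
    egfCoeff n (z * f) = z * egfCoeff n f := by
  rw [← zsmul_eq_mul, map_zsmul, zsmul_eq_mul]

theorem egfCoeff_ofNat_mul (n k : ℕ) [k.AtLeastTwo] (f : ℚ⟦X⟧) :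
    egfCoeff n ((no_index (OfNat.ofNat k)) * f) = OfNat.ofNat k * egfCoeff n f := by
  simpa using egfCoeff_intCast_mul n (OfNat.ofNat k) f

theorem egfCoeff_rescale (n : ℕ) (a : ℚ) (f : ℚ⟦X⟧) :
    egfCoeff n (rescale a f) = a ^ n * egfCoeff n f := by
  rw [egfCoeff_apply, egfCoeff_apply, coeff_rescale]
  ring

theorem egfCoeff_exp (n : ℕ) : egfCoeff n (exp ℚ) = 1 := by
  simp [egfCoeff_apply, coeff_exp, Nat.factorial_ne_zero]

theorem egfCoeff_rescale_exp (n : ℕ) (a : ℚ) : egfCoeff n (rescale a (exp ℚ)) = a ^ n := by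
  rw [egfCoeff_rescale, egfCoeff_exp, mul_one]

theorem egfCoeff_evalNegHom_exp (n : ℕ) : egfCoeff n (evalNegHom (exp ℚ)) = (-1) ^ n :=
  egfCoeff_rescale_exp n (-1)

theorem evalNegHom_exp_pow_mul_exp_pow (k m : ℕ) :
    evalNegHom (exp ℚ) ^ k * exp ℚ ^ m = rescale ((m : ℚ) - k) (exp ℚ) := by
  rw [evalNegHom, ← map_pow, exp_pow_eq_rescale_exp, exp_pow_eq_rescale_exp, rescale_rescale,
    exp_mul_exp_eq_exp_add]
  ring_nf

theorem derivative_evalNegHom_exp : d⁄dX ℚ (evalNegHom (exp ℚ)) = -evalNegHom (exp ℚ) := by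
  refine ext_egfCoeff fun n => ?_
  rw [egfCoeff_derivative, map_neg, egfCoeff_evalNegHom_exp, egfCoeff_evalNegHom_exp, pow_succ]
  ring

instance {R : Type*} [CommSemiring R] [CharZero R] : CharZero R⟦X⟧ :=
  RingHom.charZero constantCoeff

def EgfDvd (d : ℤ) (f : ℚ⟦X⟧) : Prop := ∀ n, ∃ z : ℤ, egfCoeff n f = d * z

theorem EgfDvd.mul {d e : ℤ} {f g : ℚ⟦X⟧} (hf : EgfDvd d f) (hg : EgfDvd e g) :
    EgfDvd (d * e) (f * g) := by
  intro n
  choose a ha using hf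
  choose b hb using hg
  refine ⟨∑ p ∈ antidiagonal n, n.choose p.1 * (a p.1 * b p.2), ?_⟩
  rw [egfCoeff_mul, Int.cast_mul, Int.cast_sum, mul_sum]
  refine sum_congr rfl fun p _ => ?_
  rw [ha, hb]
  push_cast
  ring

theorem egfDvd_one_one : EgfDvd 1 1 := fun n =>
  ⟨if n = 0 then 1 else 0, by rw [egfCoeff_apply, coeff_one]; split_ifs <;> simp_all⟩

theorem EgfDvd.pow {d : ℤ} {f : ℚ⟦X⟧} (hf : EgfDvd d f) (k : ℕ) : EgfDvd (d ^ k) (f ^ k) := by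
  induction k with
  | zero => simpa using egfDvd_one_one
  | succ k ih => simpa only [pow_succ] using ih.mul hf

theorem egfCoeff_numerator (n : ℕ) :
    egfCoeff n (numerator (exp ℚ) (evalNegHom (exp ℚ)) X) = numeratorEGFCoeff n := by
  rw [numerator, mul_sum, map_sum, numeratorEGFCoeff, Int.cast_sum]
  refine sum_congr rfl fun j _ => ?_
  rw [show ∀ α β u v : ℚ⟦X⟧, v * ((α + β * X) * u) = α * (v * u) + β * (X * (v * u)) by
      intros; ring,
    map_add, egfCoeff_intCast_mul, egfCoeff_intCast_mul, egfCoeff_X_mul,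
    evalNegHom_exp_pow_mul_exp_pow, egfCoeff_rescale_exp, egfCoeff_rescale_exp]
  push_cast
  ring

theorem egfDvd_numerator : EgfDvd (2 ^ 16) (numerator (exp ℚ) (evalNegHom (exp ℚ)) X) :=
  fun n => by
    obtain ⟨z, hz⟩ := two_pow_sixteen_dvd_numeratorEGFCoeff n
    exact ⟨z, by rw [egfCoeff_numerator, hz]; push_cast; ring⟩

noncomputable def eulerEGF : ℚ⟦X⟧ := mk fun n => eulerE n / n !

theorem egfCoeff_eulerEGF (n : ℕ) : egfCoeff n eulerEGF = eulerE n := by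
  rw [egfCoeff_apply, eulerEGF, coeff_mk]
  field_simp [Nat.factorial_ne_zero]

theorem eulerEGF_mul_exp_add_evalNegHom_exp : eulerEGF * (exp ℚ + evalNegHom (exp ℚ)) = 2 := by
  refine ext_egfCoeff fun n => ?_
  have hterm : ∀ p ∈ antidiagonal n, (n.choose p.1 : ℚ) *
      (egfCoeff p.1 eulerEGF * egfCoeff p.2 (exp ℚ + evalNegHom (exp ℚ))) =
      (1 + (-1) ^ n) * ((n.choose p.1 : ℤ) * eulerE p.1 : ℤ) := by
    rintro ⟨i, j⟩ hij
    rw [HasAntidiagonal.mem_antidiagonal] at hij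
    subst hij
    rw [map_add, egfCoeff_exp, egfCoeff_evalNegHom_exp, egfCoeff_eulerEGF]
    rcases Nat.even_or_odd i with hi | hi
    · rw [pow_add, hi.neg_one_pow]
      push_cast
      ring
    · rw [eulerE_of_odd hi]
      simp
  rw [egfCoeff_mul, sum_congr rfl hterm, ← mul_sum, ← Int.cast_sum,
    Nat.sum_antidiagonal_eq_sum_range_succ_mk (fun p => (n.choose p.1 : ℤ) * eulerE p.1),
    ← map_ofNat C 2, egfCoeff_apply, coeff_C]
  rcases eq_or_ne n 0 with rfl | h0
  · norm_num [eulerE]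
  rcases Nat.even_or_odd n with hn | hn
  · rw [sum_choose_mul_eulerE hn h0, if_neg h0]
    simp
  · rw [hn.neg_one_pow, if_neg h0]
    simp

theorem isSech_eulerEGF : IsSech (d⁄dX ℚ) 1 (exp ℚ) (evalNegHom (exp ℚ)) eulerEGF where
  mul_eq_one := exp_mul_exp_neg_eq_one
  derivation_u := by rw [derivative_exp, one_mul]
  derivation_v := by rw [derivative_evalNegHom_exp, one_mul]
  derivation_a := (d⁄dX ℚ).map_one_eq_zero
  mul_add_eq_two := eulerEGF_mul_exp_add_evalNegHom_exp

theorem isSech_rescale_three_eulerEGF :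
    IsSech (d⁄dX ℚ) 3 (exp ℚ ^ 3) (evalNegHom (exp ℚ) ^ 3) (rescale 3 eulerEGF) where
  mul_eq_one := by rw [← mul_pow, exp_mul_exp_neg_eq_one, one_pow]
  derivation_u := by
    rw [Derivation.leibniz_pow, derivative_exp, smul_eq_mul, nsmul_eq_mul]
    ring
  derivation_v := by
    rw [Derivation.leibniz_pow, derivative_evalNegHom_exp, smul_eq_mul, nsmul_eq_mul]
    ring
  derivation_a := (d⁄dX ℚ).map_ofNat 3
  mul_add_eq_two := by
    have hu : rescale (3 : ℚ) (exp ℚ) = exp ℚ ^ 3 := by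
      rw [exp_pow_eq_rescale_exp, Nat.cast_ofNat]
    have hv : rescale (3 : ℚ) (evalNegHom (exp ℚ)) = evalNegHom (exp ℚ) ^ 3 := by
      rw [← map_pow, ← hu, evalNegHom, rescale_rescale, rescale_rescale, mul_comm]
    have h := congrArg (rescale (3 : ℚ)) eulerEGF_mul_exp_add_evalNegHom_exp
    rwa [map_mul, map_add, map_ofNat, hu, hv] at h

theorem egfDvd_rescale_three_eulerEGF : EgfDvd 1 (rescale 3 eulerEGF) := fun n =>
  ⟨3 ^ n * eulerE n, by rw [egfCoeff_rescale, egfCoeff_eulerEGF]; push_cast; ring⟩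

noncomputable def secondDifferenceEGF : ℚ⟦X⟧ :=
  3 * eulerOp (d⁄dX ℚ) (rescale 3 eulerEGF) + eulerOp (d⁄dX ℚ) eulerEGF
    + 352 * (exp ℚ + evalNegHom (exp ℚ)) + 128 * X * (exp ℚ - evalNegHom (exp ℚ))

theorem egfCoeff_secondDifferenceEGF {b : ℕ} (hb : Even b) :
    egfCoeff b secondDifferenceEGF =
      ((3 * (3 ^ (b + 4) * eulerE (b + 4) - 4 * (3 ^ (b + 2) * eulerE (b + 2))
          + 3 * (3 ^ b * eulerE b)) + (eulerE (b + 4) - 4 * eulerE (b + 2) + 3 * eulerE b)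
        + 704 + 256 * b : ℤ) : ℚ) := by
  have hX : egfCoeff b (X * (exp ℚ - evalNegHom (exp ℚ))) = 2 * b := by
    rw [egfCoeff_X_mul, map_sub, egfCoeff_exp, egfCoeff_evalNegHom_exp]
    rcases eq_or_ne b 0 with rfl | hb0
    · simp
    · rw [(Nat.Even.sub_odd (Nat.pos_of_ne_zero hb0) hb odd_one).neg_one_pow]
      ring
  simp only [secondDifferenceEGF, eulerOp, map_add, map_sub, mul_assoc, egfCoeff_ofNat_mul, hX,
    egfCoeff_derivative, egfCoeff_rescale, egfCoeff_eulerEGF, egfCoeff_exp,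
    egfCoeff_evalNegHom_exp, hb.neg_one_pow]
  push_cast
  ring

theorem egfDvd_secondDifferenceEGF : EgfDvd (2 ^ 11) secondDifferenceEGF := by
  have hE := isSech_eulerEGF
  have hE3 := isSech_rescale_three_eulerEGF
  have hN : secondDifferenceEGF * (exp ℚ ^ 3 + evalNegHom (exp ℚ) ^ 3) ^ 5 =
      numerator (exp ℚ) (evalNegHom (exp ℚ)) X := by
    rw [secondDifferenceEGF, hE3.eulerOp_eq, hE.eulerOp_eq]
    exact mul_pow_five_eq_numerator hE.mul_eq_one hE.mul_add_eq_two hE3.mul_add_eq_two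
  have h32 : 32 * secondDifferenceEGF =
      numerator (exp ℚ) (evalNegHom (exp ℚ)) X * rescale 3 eulerEGF ^ 5 := by
    linear_combination rescale 3 eulerEGF ^ 5 * hN
      - secondDifferenceEGF * congrArg (· ^ 5) hE3.mul_add_eq_two
  intro n
  obtain ⟨z, hz⟩ := (egfDvd_numerator.mul (egfDvd_rescale_three_eulerEGF.pow 5)) n
  refine ⟨z, mul_left_cancel₀ (by norm_num : (32 : ℚ) ≠ 0) ?_⟩
  rw [← egfCoeff_ofNat_mul, h32, hz]
  push_cast
  ring

theorem four_dvd_three_pow_succ_add_one {b : ℕ} (hb : Even b) : (4 : ℤ) ∣ 3 ^ (b + 1) + 1 := by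
  obtain ⟨c, rfl⟩ := hb
  have h := (((show (9 : ℤ) ≡ 1 [ZMOD 4] by decide).pow c).mul_left 3).add_right 1
  rw [one_pow] at h
  rw [← two_mul, pow_succ', pow_mul]
  norm_num
  exact Int.modEq_zero_iff_dvd.mp (h.trans (by decide))

theorem scaled_eulerE_second_difference_mod_512 (b : ℕ) (hb : Even b) :
    3 * ((3 ^ (b + 1) + 1 : ℤ) / 4) * eulerE b
      - 4 * ((3 ^ (b + 3) + 1 : ℤ) / 4) * eulerE (b + 2)
      + ((3 ^ (b + 5) + 1 : ℤ) / 4) * eulerE (b + 4) ≡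
        -176 - 64 * (b : ℤ) [ZMOD 2 ^ 9] := by
  obtain ⟨z, hz⟩ := egfDvd_secondDifferenceEGF b
  rw [egfCoeff_secondDifferenceEGF hb] at hz
  have hT : 3 * (3 ^ (b + 4) * eulerE (b + 4) - 4 * (3 ^ (b + 2) * eulerE (b + 2))
      + 3 * (3 ^ b * eulerE b)) + (eulerE (b + 4) - 4 * eulerE (b + 2) + 3 * eulerE b)
      + 704 + 256 * b = 2 ^ 11 * z := by exact_mod_cast hz
  have h1 : (3 ^ (b + 1) + 1 : ℤ) / 4 * 4 = 3 ^ (b + 1) + 1 :=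
    Int.ediv_mul_cancel (four_dvd_three_pow_succ_add_one hb)
  have h3 : (3 ^ (b + 3) + 1 : ℤ) / 4 * 4 = 3 ^ (b + 3) + 1 :=
    Int.ediv_mul_cancel (four_dvd_three_pow_succ_add_one (hb.add even_two))
  have h5 : (3 ^ (b + 5) + 1 : ℤ) / 4 * 4 = 3 ^ (b + 5) + 1 :=
    Int.ediv_mul_cancel (four_dvd_three_pow_succ_add_one (hb.add (by decide : Even 4)))
  refine Int.modEq_iff_dvd.mpr ⟨-z, mul_left_cancel₀ four_ne_zero ?_⟩
  linear_combination -hT - 3 * eulerE b * h1 + 4 * eulerE (b + 2) * h3 - eulerE (b + 4) * h5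
end
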